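/- Let d, h be positive integers, let W_in be a real h×d matrix, W_out a real d×h matrix, and let μ be a probability measure on ℝ^d. Suppose D : ℝ^d → Matrix (Fin h) (Fin h) ℝ assigns to each x a diagonal matrix whose diagonal entries lie in {0,1}, and set J_r(x) = W_out * D(x) * W_in and J_f(x) = 1 + J_r(x) (identity plus J_r). Assume every matrix entry of x ↦ J_f(x)ᵀ * J_f(x) is μ-integrable, that the entrywise expectation ∫ J_f(x)ᵀ * J_f(x) dμ(x) equals the d×d identity matrix (dynamic isometry in expectation), that the entrywise expectation ∫ D(x) dμ(x) equals (1/2) times the h×h identity matrix, and that the set {x : J_r(x) ≠ 0} has positive μ-measure. Then trace(W_out * W_in) = −∫ ‖J_r(x)‖_F² dμ(x), and in particular trace(W_out * W_in) < 0. -/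

import Mathlib

open MeasureTheory Matrix

/-!
Expand `J_fᵀ J_f = (1 + J_r)ᵀ (1 + J_r)` and take traces:
`tr (J_fᵀ J_f) = d + 2 tr J_r + ‖J_r‖_F²`. Averaging, dynamic isometry turns the left side into `d`,
so `E ‖J_r‖_F² = -2 E[tr J_r]`. Since `D(x)` is diagonal, `tr J_r(x)` is linear in the diagonal of
`D(x)`, whence `E[tr J_r] = tr (W_out E[D] W_in) = ½ tr (W_out W_in)`. Finally `E ‖J_r‖_F² > 0`
because `J_r ≠ 0` on a set of positive measure.
-/

/-- Squared Frobenius norm of a real matrix: `‖M‖_F² = Σ_{l,m} M_{lm}²`. -/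
noncomputable def frobSq {n m : Type*} [Fintype n] [Fintype m]
    (M : Matrix n m ℝ) : ℝ :=
  ∑ i, ∑ j, (M i j) ^ 2

section Matrix

variable {m n R : Type*} [Fintype m] [Fintype n]

lemma frobSq_nonneg (M : Matrix m n ℝ) : 0 ≤ frobSq M := by
  unfold frobSq
  positivity

lemma trace_transpose_mul_self (M : Matrix m n ℝ) : trace (Mᵀ * M) = frobSq M := by
  simp only [trace, diag, mul_apply, transpose_apply, frobSq, sq]
  exact Finset.sum_comm

lemma frobSq_eq_zero_iff {M : Matrix m n ℝ} : frobSq M = 0 ↔ M = 0 := by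
  rw [← trace_transpose_mul_self, ← conjTranspose_eq_transpose_of_trivial,
    trace_conjTranspose_mul_self_eq_zero_iff]

lemma trace_transpose_mul_one_add [DecidableEq n] (A : Matrix n n ℝ) :
    trace ((1 + A)ᵀ * (1 + A)) = Fintype.card n + 2 * trace A + frobSq A := by
  have hexpand : (1 + A)ᵀ * (1 + A) = 1 + A + Aᵀ + Aᵀ * A := by
    rw [transpose_add, transpose_one]
    noncomm_ring
  rw [hexpand, trace_add, trace_add, trace_add, trace_one, trace_transpose,
    trace_transpose_mul_self]
  ring

lemma trace_mul_mul_of_isDiag [CommSemiring R] (A : Matrix m n R) {D : Matrix n n R}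
    (hD : D.IsDiag) (B : Matrix n m R) :
    trace (A * D * B) = ∑ k, (B * A) k k * D k k := by
  classical
  rw [trace_mul_cycle]
  conv_lhs => rw [← hD.diagonal_diag]
  simp only [trace, diag, mul_diagonal]

end Matrix

section Expectation

variable {α n : Type*} [MeasurableSpace α] {μ : Measure α} [Fintype n]

lemma integrable_trace {M : α → Matrix n n ℝ} (hM : ∀ i, Integrable (fun x => M x i i) μ) :
    Integrable (fun x => trace (M x)) μ :=
  integrable_finsetSum _ fun i _ => hM i

lemma integral_trace {M : α → Matrix n n ℝ} (hM : ∀ i, Integrable (fun x => M x i i) μ) :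
    ∫ x, trace (M x) ∂μ = ∑ i, ∫ x, M x i i ∂μ :=
  integral_finsetSum _ fun i _ => hM i

variable {m : Type*} [Fintype m] (A : Matrix m n ℝ) (B : Matrix n m ℝ) {D : α → Matrix n n ℝ}
  (hD : ∀ x, (D x).IsDiag) (hDint : ∀ k, Integrable (fun x => D x k k) μ)
include hD hDint

lemma integrable_trace_mul_mul_of_isDiag :
    Integrable (fun x => trace (A * D x * B)) μ := by
  simp only [trace_mul_mul_of_isDiag A (hD _)]
  exact integrable_finsetSum _ fun k _ => (hDint k).const_mul _

lemma integral_trace_mul_mul_of_isDiag {c : ℝ} (hDc : ∀ k, ∫ x, D x k k ∂μ = c) :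
    ∫ x, trace (A * D x * B) ∂μ = c * trace (A * B) := by
  simp only [trace_mul_mul_of_isDiag A (hD _)]
  rw [integral_finsetSum _ fun k _ => (hDint k).const_mul _, trace_mul_comm, trace,
    Finset.mul_sum]
  simp only [integral_const_mul, hDc, diag, mul_comm c]

end Expectation

section DynamicIsometry

variable {α n : Type*} [MeasurableSpace α] {μ : Measure α} [Fintype n]

lemma integral_frobSq_eq_neg_two_mul_integral_trace [DecidableEq n] [IsProbabilityMeasure μ]
    {A : α → Matrix n n ℝ}
    (hInt : ∀ i, Integrable (fun x => ((1 + A x : Matrix n n ℝ)ᵀ * (1 + A x)) i i) μ)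
    (hIso : ∀ i, ∫ x, ((1 + A x : Matrix n n ℝ)ᵀ * (1 + A x)) i i ∂μ = 1)
    (hA : Integrable (fun x => trace (A x)) μ) :
    Integrable (fun x => frobSq (A x)) μ ∧
      ∫ x, frobSq (A x) ∂μ = -2 * ∫ x, trace (A x) ∂μ := by
  have hfrob : ∀ x, frobSq (A x) =
      trace ((1 + A x)ᵀ * (1 + A x)) - Fintype.card n - 2 * trace (A x) := fun x => by
    rw [trace_transpose_mul_one_add]
    ring
  have hTint := integrable_trace hInt
  have hTval : ∫ x, trace ((1 + A x : Matrix n n ℝ)ᵀ * (1 + A x)) ∂μ = (Fintype.card n : ℝ) := by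
    rw [integral_trace hInt]
    simp only [hIso, Finset.sum_const, Finset.card_univ, nsmul_eq_mul, mul_one]
  simp only [hfrob]
  refine ⟨(hTint.sub (integrable_const _)).sub (hA.const_mul 2), ?_⟩
  rw [integral_sub ?_ (hA.const_mul 2), integral_sub hTint (integrable_const _), hTval,
    integral_const_mul]
  · simp
  · exact hTint.sub (integrable_const _)

lemma integral_frobSq_pos {m : Type*} [Fintype m] {A : α → Matrix m n ℝ}
    (hint : Integrable (fun x => frobSq (A x)) μ) (hpos : 0 < μ {x | A x ≠ 0}) :
    0 < ∫ x, frobSq (A x) ∂μ := by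
  rw [integral_pos_iff_support_of_nonneg (fun x => frobSq_nonneg (A x)) hint]
  simpa [Function.support, frobSq_eq_zero_iff] using hpos

end DynamicIsometry

theorem negative_diagonal_structure_general
    (d h : ℕ)
    (W_in : Matrix (Fin h) (Fin d) ℝ) (W_out : Matrix (Fin d) (Fin h) ℝ)
    (μ : Measure (EuclideanSpace ℝ (Fin d))) [IsProbabilityMeasure μ]
    (D : EuclideanSpace ℝ (Fin d) → Matrix (Fin h) (Fin h) ℝ)
    (hDdiag : ∀ x, (D x).IsDiag)
    (Jr : EuclideanSpace ℝ (Fin d) → Matrix (Fin d) (Fin d) ℝ)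
    (hJr : ∀ x, Jr x = W_out * D x * W_in)
    (Jf : EuclideanSpace ℝ (Fin d) → Matrix (Fin d) (Fin d) ℝ)
    (hJf : ∀ x, Jf x = 1 + Jr x)
    (hInt : ∀ i j, Integrable (fun x => ((Jf x)ᵀ * Jf x) i j) μ)
    (hIso : ∀ i j, ∫ x, ((Jf x)ᵀ * Jf x) i j ∂μ
      = (1 : Matrix (Fin d) (Fin d) ℝ) i j)
    (hDhalf : ∀ k l, ∫ x, D x k l ∂μ
      = ((1 / 2 : ℝ) • (1 : Matrix (Fin h) (Fin h) ℝ)) k l)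
    (hpos : 0 < μ {x | Jr x ≠ 0}) :
    Matrix.trace (W_out * W_in) = -∫ x, frobSq (Jr x) ∂μ ∧
    Matrix.trace (W_out * W_in) < 0 := by
  obtain rfl : Jf = fun x => 1 + Jr x := funext hJf
  obtain rfl : Jr = fun x => W_out * D x * W_in := funext hJr
  have hDdiag_half : ∀ k, ∫ x, D x k k ∂μ = 1 / 2 := fun k => by simp [hDhalf]
  have hDint : ∀ k, Integrable (fun x => D x k k) μ := fun k =>
    .of_integral_ne_zero (by simp [hDdiag_half])
  obtain ⟨hfrob_int, hfrob⟩ := integral_frobSq_eq_neg_two_mul_integral_trace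
    (fun i => hInt i i) (fun i => (hIso i i).trans (one_apply_eq i))
    (integrable_trace_mul_mul_of_isDiag W_out W_in hDdiag hDint)
  have htrace : trace (W_out * W_in) = -∫ x, frobSq (W_out * D x * W_in) ∂μ := by
    rw [hfrob, integral_trace_mul_mul_of_isDiag W_out W_in hDdiag hDint hDdiag_half]
    ring
  exact ⟨htrace, htrace ▸ neg_neg_of_pos (integral_frobSq_pos hfrob_int hpos)⟩

/-- **Negative diagonal structure from dynamic isometry.**
If the block Jacobian `J_f(x) = I + J_r(x)` with `J_r(x) = W_out D(x) W_in`
satisfies dynamic isometry in expectation `E[J_fᵀ J_f] = I`, where `D(x)` is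
diagonal with entries in `{0,1}` and `E[D(x)] = ½ I`, and the residual is
non-trivial (`{x : J_r(x) ≠ 0}` has positive measure), then
`trace(W_out W_in) = −E[‖J_r(x)‖_F²] < 0`. -/
theorem negative_diagonal_structure
    (d h : ℕ) (hd : 0 < d) (hh : 0 < h)
    (W_in : Matrix (Fin h) (Fin d) ℝ) (W_out : Matrix (Fin d) (Fin h) ℝ)
    (μ : Measure (EuclideanSpace ℝ (Fin d))) [IsProbabilityMeasure μ]
    (D : EuclideanSpace ℝ (Fin d) → Matrix (Fin h) (Fin h) ℝ)
    (hDdiag : ∀ x, (D x).IsDiag)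
    (hD01 : ∀ x k, D x k k = 0 ∨ D x k k = 1)
    (Jr : EuclideanSpace ℝ (Fin d) → Matrix (Fin d) (Fin d) ℝ)
    (hJr : ∀ x, Jr x = W_out * D x * W_in)
    (Jf : EuclideanSpace ℝ (Fin d) → Matrix (Fin d) (Fin d) ℝ)
    (hJf : ∀ x, Jf x = 1 + Jr x)
    (hInt : ∀ i j, Integrable (fun x => ((Jf x)ᵀ * Jf x) i j) μ)
    (hIso : ∀ i j, ∫ x, ((Jf x)ᵀ * Jf x) i j ∂μ
      = (1 : Matrix (Fin d) (Fin d) ℝ) i j)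
    (hDhalf : ∀ k l, ∫ x, D x k l ∂μ
      = ((1 / 2 : ℝ) • (1 : Matrix (Fin h) (Fin h) ℝ)) k l)
    (hpos : 0 < μ {x | Jr x ≠ 0}) :
    Matrix.trace (W_out * W_in) = -∫ x, frobSq (Jr x) ∂μ ∧
    Matrix.trace (W_out * W_in) < 0 :=
  negative_diagonal_structure_general d h W_in W_out μ D hDdiag Jr hJr Jf hJf hInt hIso hDhalf hpos
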